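/- A function f : Xⁿ → X is a polynomial function if and only if it admits the disjunctive normal form representation f(x) = ⋁_{I ⊆ {1,…,n}} ( α_f(I) ∧ ⋀_{i∈I} x_i ), where α_f(I) = f(e_I); equivalently, if and only if it admits the conjunctive normal form representation f(x) = ⋀_{I ⊆ {1,…,n}} ( β_f(I) ∨ ⋁_{i∈I} x_i ), where β_f(I) = f(e_{{1,…,n}∖I}). -/

import Mathlib

/-- Lattice polynomial functions in `n` variables on a bounded distributive lattice. -/
inductive IsLatticePolynomial {L : Type*} [DistribLattice L] [BoundedOrder L] {n : ℕ} :
    ((Fin n → L) → L) → Prop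
  | proj (i : Fin n) : IsLatticePolynomial (fun x => x i)
  | const (c : L) : IsLatticePolynomial (fun _ => c)
  | inf {p q : (Fin n → L) → L} :
      IsLatticePolynomial p → IsLatticePolynomial q → IsLatticePolynomial (fun x => p x ⊓ q x)
  | sup {p q : (Fin n → L) → L} :
      IsLatticePolynomial p → IsLatticePolynomial q → IsLatticePolynomial (fun x => p x ⊔ q x)

/-- `e_I`: the 0-1 tuple whose `i`th component is `⊤` iff `i ∈ I`. -/
def eTuple {L : Type*} [Lattice L] [BoundedOrder L] {n : ℕ} (I : Finset (Fin n)) :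
    Fin n → L := fun i => if i ∈ I then ⊤ else ⊥

lemma IsLatticePolynomial.monotone {L : Type*} [DistribLattice L] [BoundedOrder L] {n : ℕ}
    {p : (Fin n → L) → L} (hp : IsLatticePolynomial p) : Monotone p := by
  induction hp with
  | proj i => exact fun x y h => h i
  | const c => exact monotone_const
  | inf hp hq ihp ihq => exact fun x y h => inf_le_inf (ihp h) (ihq h)
  | sup hp hq ihp ihq => exact fun x y h => sup_le_sup (ihp h) (ihq h)

lemma eTuple_mono {L : Type*} [Lattice L] [BoundedOrder L] {n : ℕ} {I J : Finset (Fin n)}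
    (h : I ⊆ J) : (eTuple I : Fin n → L) ≤ eTuple J := by
  intro i
  unfold eTuple
  by_cases hi : i ∈ I
  · simp [hi, h hi]
  · simp [hi]

lemma poly_finset_sup {L : Type*} [DistribLattice L] [BoundedOrder L] {n : ℕ} {ι : Type*}
    [DecidableEq ι] (s : Finset ι) (g : ι → (Fin n → L) → L)
    (hg : ∀ i ∈ s, IsLatticePolynomial (g i)) :
    IsLatticePolynomial (fun x => s.sup (fun i => g i x)) := by
  induction s using Finset.induction_on with
  | empty => simpa using IsLatticePolynomial.const (⊥ : L)
  | insert _ _ h ih =>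
    simp only [Finset.sup_insert]
    exact (hg _ (Finset.mem_insert_self _ _)).sup
      (ih fun i hi => hg i (Finset.mem_insert_of_mem hi))

lemma poly_finset_inf {L : Type*} [DistribLattice L] [BoundedOrder L] {n : ℕ} {ι : Type*}
    [DecidableEq ι] (s : Finset ι) (g : ι → (Fin n → L) → L)
    (hg : ∀ i ∈ s, IsLatticePolynomial (g i)) :
    IsLatticePolynomial (fun x => s.inf (fun i => g i x)) := by
  induction s using Finset.induction_on with
  | empty => simpa using IsLatticePolynomial.const (⊤ : L)
  | insert _ _ h ih =>
    simp only [Finset.inf_insert]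
    exact (hg _ (Finset.mem_insert_self _ _)).inf
      (ih fun i hi => hg i (Finset.mem_insert_of_mem hi))

lemma poly_coord_inf {L : Type*} [DistribLattice L] [BoundedOrder L] {n : ℕ}
    (I : Finset (Fin n)) : IsLatticePolynomial (fun x : Fin n → L => I.inf x) :=
  poly_finset_inf I (fun i x => x i) (fun i _ => IsLatticePolynomial.proj i)

lemma poly_coord_sup {L : Type*} [DistribLattice L] [BoundedOrder L] {n : ℕ}
    (I : Finset (Fin n)) : IsLatticePolynomial (fun x : Fin n → L => I.sup x) :=
  poly_finset_sup I (fun i x => x i) (fun i _ => IsLatticePolynomial.proj i)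

lemma poly_dnf {X : Type*} [DistribLattice X] [BoundedOrder X] {n : ℕ} {f : (Fin n → X) → X}
    (hf : IsLatticePolynomial f) (x : Fin n → X) :
    f x = Finset.univ.sup (fun I : Finset (Fin n) => f (eTuple I) ⊓ I.inf x) := by
  induction hf with
  | proj i =>
    dsimp only
    apply le_antisymm
    · refine le_trans ?_ (Finset.le_sup
        (f := fun I : Finset (Fin n) => eTuple I i ⊓ I.inf x) (Finset.mem_univ {i}))
      simp [eTuple]
    · apply Finset.sup_le
      intro I _
      by_cases hi : i ∈ I
      · exact le_trans inf_le_right (Finset.inf_le hi)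
      · simp [eTuple, hi]
  | const c =>
    dsimp only
    apply le_antisymm
    · refine le_trans ?_ (Finset.le_sup
        (f := fun I : Finset (Fin n) => c ⊓ I.inf x) (Finset.mem_univ ∅))
      simp
    · exact Finset.sup_le fun I _ => inf_le_left
  | @inf p q hp hq ihp ihq =>
    dsimp only
    apply le_antisymm
    · rw [ihp, ihq, Finset.sup_inf_sup]
      apply Finset.sup_le
      rintro ⟨I, J⟩ _
      simp only []
      refine le_trans ?_ (Finset.le_sup (Finset.mem_univ (I ∪ J)))
      have h1 : p (eTuple I) ≤ p (eTuple (I ∪ J)) :=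
        hp.monotone (eTuple_mono Finset.subset_union_left)
      have h2 : q (eTuple J) ≤ q (eTuple (I ∪ J)) :=
        hq.monotone (eTuple_mono Finset.subset_union_right)
      have h3 : (p (eTuple I) ⊓ I.inf x) ⊓ (q (eTuple J) ⊓ J.inf x)
          ≤ (p (eTuple (I ∪ J)) ⊓ I.inf x) ⊓ (q (eTuple (I ∪ J)) ⊓ J.inf x) :=
        inf_le_inf (inf_le_inf h1 le_rfl) (inf_le_inf h2 le_rfl)
      refine h3.trans ?_
      rw [inf_inf_inf_comm, Finset.inf_union]
    · apply Finset.sup_le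
      intro I _
      refine le_inf ?_ ?_
      · refine le_trans ?_ (le_of_eq ihp.symm)
        refine le_trans ?_ (Finset.le_sup (Finset.mem_univ I))
        exact inf_le_inf (inf_le_left) le_rfl
      · refine le_trans ?_ (le_of_eq ihq.symm)
        refine le_trans ?_ (Finset.le_sup (Finset.mem_univ I))
        exact inf_le_inf (inf_le_right) le_rfl
  | @sup p q hp hq ihp ihq =>
    dsimp only
    apply le_antisymm
    · refine sup_le ?_ ?_
      · rw [ihp]
        apply Finset.sup_le
        intro I _
        refine le_trans ?_ (Finset.le_sup (Finset.mem_univ I))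
        exact inf_le_inf le_sup_left le_rfl
      · rw [ihq]
        apply Finset.sup_le
        intro I _
        refine le_trans ?_ (Finset.le_sup (Finset.mem_univ I))
        exact inf_le_inf le_sup_right le_rfl
    · apply Finset.sup_le
      intro I _
      rw [inf_sup_right]
      refine sup_le ?_ ?_
      · refine le_trans ?_ le_sup_left
        rw [ihp]
        apply Finset.le_sup (Finset.mem_univ I)
      · refine le_trans ?_ le_sup_right
        rw [ihq]
        apply Finset.le_sup (Finset.mem_univ I)

lemma poly_cnf {X : Type*} [DistribLattice X] [BoundedOrder X] {n : ℕ} {f : (Fin n → X) → X}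
    (hf : IsLatticePolynomial f) (x : Fin n → X) :
    f x = Finset.univ.inf (fun I : Finset (Fin n) => f (eTuple Iᶜ) ⊔ I.sup x) := by
  induction hf with
  | proj i =>
    dsimp only
    apply le_antisymm
    · apply Finset.le_inf
      intro I _
      by_cases hi : i ∈ I
      · exact le_trans (Finset.le_sup hi) le_sup_right
      · have : i ∈ Iᶜ := Finset.mem_compl.2 hi
        simp [eTuple, this]
    · have h1 : eTuple ({i} : Finset (Fin n))ᶜ i ⊔ ({i} : Finset (Fin n)).sup x = x i := by
        simp [eTuple]
      refine le_trans (Finset.inf_le (Finset.mem_univ ({i} : Finset (Fin n)))) ?_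
      rw [h1]
  | const c =>
    dsimp only
    apply le_antisymm
    · exact Finset.le_inf fun I _ => le_sup_left
    · have h1 : (fun _ : Fin n → X => c) (eTuple (∅ : Finset (Fin n))ᶜ)
          ⊔ (∅ : Finset (Fin n)).sup x = c := by simp
      refine le_trans (Finset.inf_le (Finset.mem_univ (∅ : Finset (Fin n)))) ?_
      rw [h1]
  | @inf p q hp hq ihp ihq =>
    dsimp only
    apply le_antisymm
    · apply Finset.le_inf
      intro I _
      rw [sup_inf_right]
      refine le_inf ?_ ?_
      · refine le_trans inf_le_left ?_
        rw [ihp]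
        exact Finset.inf_le (Finset.mem_univ I)
      · refine le_trans inf_le_right ?_
        rw [ihq]
        exact Finset.inf_le (Finset.mem_univ I)
    · refine le_inf ?_ ?_
      · rw [ihp]
        apply Finset.le_inf
        intro I _
        refine le_trans (Finset.inf_le (Finset.mem_univ I)) ?_
        exact sup_le_sup inf_le_left le_rfl
      · rw [ihq]
        apply Finset.le_inf
        intro I _
        refine le_trans (Finset.inf_le (Finset.mem_univ I)) ?_
        exact sup_le_sup inf_le_right le_rfl
  | @sup p q hp hq ihp ihq =>
    dsimp only
    apply le_antisymm
    · apply Finset.le_inf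
      intro I _
      refine sup_le ?_ ?_
      · rw [ihp]
        refine le_trans (Finset.inf_le (Finset.mem_univ I)) ?_
        exact sup_le_sup le_sup_left le_rfl
      · rw [ihq]
        refine le_trans (Finset.inf_le (Finset.mem_univ I)) ?_
        exact sup_le_sup le_sup_right le_rfl
    · rw [ihp, ihq, Finset.inf_sup_inf]
      apply Finset.le_inf
      rintro ⟨I, J⟩ _
      simp only []
      refine le_trans (Finset.inf_le (Finset.mem_univ (I ∪ J))) ?_
      have h1 : p (eTuple (I ∪ J)ᶜ) ≤ p (eTuple Iᶜ) :=
        hp.monotone (eTuple_mono (Finset.compl_subset_compl.2 Finset.subset_union_left))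
      have h2 : q (eTuple (I ∪ J)ᶜ) ≤ q (eTuple Jᶜ) :=
        hq.monotone (eTuple_mono (Finset.compl_subset_compl.2 Finset.subset_union_right))
      have h3 : (p (eTuple (I ∪ J)ᶜ) ⊔ I.sup x) ⊔ (q (eTuple (I ∪ J)ᶜ) ⊔ J.sup x)
          ≤ (p (eTuple Iᶜ) ⊔ I.sup x) ⊔ (q (eTuple Jᶜ) ⊔ J.sup x) :=
        sup_le_sup (sup_le_sup h1 le_rfl) (sup_le_sup h2 le_rfl)
      refine le_trans ?_ h3
      rw [sup_sup_sup_comm, Finset.sup_union]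

theorem statement_17 {X : Type*} [DistribLattice X] [BoundedOrder X] {n : ℕ} (hn : 0 < n)
    (f : (Fin n → X) → X) :
    (IsLatticePolynomial f ↔
      ∀ x : Fin n → X,
        f x = Finset.univ.sup (fun I : Finset (Fin n) => f (eTuple I) ⊓ I.inf x)) ∧
    (IsLatticePolynomial f ↔
      ∀ x : Fin n → X,
        f x = Finset.univ.inf (fun I : Finset (Fin n) => f (eTuple Iᶜ) ⊔ I.sup x)) := by
  constructor
  · constructor
    · exact fun hf x => poly_dnf hf x
    · intro h
      have hfe : f = fun x => Finset.univ.sup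
          (fun I : Finset (Fin n) => f (eTuple I) ⊓ I.inf x) := funext h
      rw [hfe]
      exact poly_finset_sup Finset.univ _
        (fun I _ => (IsLatticePolynomial.const (f (eTuple I))).inf (poly_coord_inf I))
  · constructor
    · exact fun hf x => poly_cnf hf x
    · intro h
      have hfe : f = fun x => Finset.univ.inf
          (fun I : Finset (Fin n) => f (eTuple Iᶜ) ⊔ I.sup x) := funext h
      rw [hfe]
      exact poly_finset_inf Finset.univ _
        (fun I _ => (IsLatticePolynomial.const (f (eTuple Iᶜ))).sup (poly_coord_sup I))
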